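/- Let *₁ and *₂ be continuous t-norms on [0,1], and suppose there is an idempotent element q of *₁ and an order-isomorphism φ : [q,1] → [0,1] with φ(a *₁ b) = φ(a) *₂ φ(b) for all a,b ∈ [q,1]. Then an approach space (X, δ) is *₁-metrizable if and only if it is *₂-metrizable. -/

import Mathlib

open scoped ENNReal

/-- A distance distribution: a map `[0,∞] → [0,1]` with value `0` at `0`, `1` at `∞`,
monotone and left-continuous on `(0,∞)`. -/
structure IsDistanceDistribution (φ : ℝ≥0∞ → ℝ) : Prop where
  mem : ∀ t, φ t ∈ Set.Icc (0:ℝ) 1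
  zero : φ 0 = 0
  top : φ ⊤ = 1
  mono : Monotone φ
  leftCont : ∀ t : ℝ≥0∞, 0 < t → t ≠ ⊤ → φ t = ⨆ s : {s : ℝ≥0∞ // s < t}, φ s.1

/-- A continuous t-norm on the interval `[a,b] ⊆ ℝ`. -/
structure IsContinuousTNorm (a b : ℝ) (m : ℝ → ℝ → ℝ) : Prop where
  mem : ∀ ⦃p q : ℝ⦄, p ∈ Set.Icc a b → q ∈ Set.Icc a b → m p q ∈ Set.Icc a b
  comm : ∀ ⦃p q : ℝ⦄, p ∈ Set.Icc a b → q ∈ Set.Icc a b → m p q = m q p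
  assoc : ∀ ⦃p q r : ℝ⦄, p ∈ Set.Icc a b → q ∈ Set.Icc a b → r ∈ Set.Icc a b →
    m (m p q) r = m p (m q r)
  unit : ∀ ⦃p : ℝ⦄, p ∈ Set.Icc a b → m p b = p
  mono : ∀ ⦃p p' q q' : ℝ⦄, p ∈ Set.Icc a b → p' ∈ Set.Icc a b → q ∈ Set.Icc a b →
    q' ∈ Set.Icc a b → p ≤ p' → q ≤ q' → m p q ≤ m p' q'
  continuous : ContinuousOn (fun x : ℝ × ℝ => m x.1 x.2) (Set.Icc a b ×ˢ Set.Icc a b)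

/-- `α` is a probabilistic metric on `X` with respect to the t-norm `m` on `[0,1]`. -/
structure IsProbMetric {X : Type*} (m : ℝ → ℝ → ℝ) (α : X → X → ℝ≥0∞ → ℝ) : Prop where
  dd : ∀ x y, IsDistanceDistribution (α x y)
  refl : ∀ x (t : ℝ≥0∞), 0 < t → α x x t = 1
  symm : ∀ x y t, α x y t = α y x t
  sep : ∀ x y, (∀ t : ℝ≥0∞, 0 < t → α x y t = 1) → x = y
  triangle : ∀ x y z (r s : ℝ≥0∞), m (α y z r) (α x y s) ≤ α x z (r + s)

/-- The approach distance induced by a probabilistic metric: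
`δ_α(x,A) = inf { r | sup_{a ∈ A} α(x,a,r) = 1 }`. -/
noncomputable def probDist {X : Type*} (α : X → X → ℝ≥0∞ → ℝ) (x : X) (A : Set X) : ℝ≥0∞ :=
  sInf {r : ℝ≥0∞ | sSup ((fun a => α x a r) '' A) = 1}

/-- `δ` is an approach structure on `X`. -/
structure IsApproach {X : Type*} (δ : X → Set X → ℝ≥0∞) : Prop where
  point : ∀ x, δ x {x} = 0
  empty : ∀ x, δ x (∅ : Set X) = ⊤
  union : ∀ x A B, δ x (A ∪ B) = min (δ x A) (δ x B)
  triangle : ∀ x (A B : Set X), δ x A ≤ (⨆ b : B, δ b.1 A) + δ x B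

/-- An approach structure is probabilistic metrizable w.r.t. the t-norm `m`. -/
def ProbMetrizable {X : Type*} (m : ℝ → ℝ → ℝ) (δ : X → Set X → ℝ≥0∞) : Prop :=
  ∃ α : X → X → ℝ≥0∞ → ℝ, IsProbMetric m α ∧ ∀ x A, δ x A = probDist α x A

/-- The minimum t-norm. -/
def minT : ℝ → ℝ → ℝ := fun p q => min p q
/-- The product t-norm. -/
def prodT : ℝ → ℝ → ℝ := fun p q => p * q
/-- The Łukasiewicz t-norm. -/
def lukT : ℝ → ℝ → ℝ := fun p q => max 0 (p + q - 1)

/-- `q⁻`: the largest idempotent element of `m` in `[a, q]`. -/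
noncomputable def idemBelow (a : ℝ) (m : ℝ → ℝ → ℝ) (q : ℝ) : ℝ :=
  sSup {p : ℝ | p ∈ Set.Icc a q ∧ m p p = p}

/-!
Given a probabilistic metric `α` and a map `g : [0,1] → [0,1]`, let `β(x,y,t) = g (α(x,y,t))`
for `t > 0` and `β(x,y,0) = 0`. If `g` is monotone, continuous, satisfies
`g a *₂ g b ≤ g (a *₁ b)` and `g p = 1 ↔ p = 1`, then `β` is a `*₂`-probabilistic metric, and
`δ_β = δ_α` because `δ_α` only records whether suprema of values of `α` reach `1`, which `g`
preserves. Both directions are instances: `g = φ ∘ max q` from `*₁` to `*₂`, using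
`max q a *₁ max q b ≤ max q (a *₁ b)` and that `[q,1]` is closed under `*₁`, and `g = φ⁻¹`
from `*₂` to `*₁`.
-/

open Set

namespace IsContinuousTNorm

variable {a b : ℝ} {m : ℝ → ℝ → ℝ}

theorem left_absorb (hm : IsContinuousTNorm a b m) {p : ℝ} (hp : p ∈ Icc a b) : m a p = a := by
  have ha : a ∈ Icc a b := left_mem_Icc.2 (hp.1.trans hp.2)
  have hb : b ∈ Icc a b := right_mem_Icc.2 (hp.1.trans hp.2)
  refine le_antisymm ?_ (hm.mem ha hp).1
  calc m a p ≤ m a b := hm.mono ha ha hp hb le_rfl hp.2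
    _ = a := hm.unit ha

theorem right_absorb (hm : IsContinuousTNorm a b m) {p : ℝ} (hp : p ∈ Icc a b) : m p a = a := by
  rw [hm.comm hp (left_mem_Icc.2 (hp.1.trans hp.2)), hm.left_absorb hp]

theorem mem_Icc_of_idempotent (hm : IsContinuousTNorm a b m) {q x y : ℝ} (hq : q ∈ Icc a b)
    (hqq : m q q = q) (hx : x ∈ Icc q b) (hy : y ∈ Icc q b) : m x y ∈ Icc q b := by
  have hx' : x ∈ Icc a b := ⟨hq.1.trans hx.1, hx.2⟩
  have hy' : y ∈ Icc a b := ⟨hq.1.trans hy.1, hy.2⟩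
  refine ⟨?_, (hm.mem hx' hy').2⟩
  calc q = m q q := hqq.symm
    _ ≤ m x y := hm.mono hq hx' hq hy' hx.1 hy.1

/-- Holds because `m q z ≤ m q b = q`. -/
theorem map_max_le (hm : IsContinuousTNorm a b m) {q x y : ℝ} (hq : q ∈ Icc a b)
    (hx : x ∈ Icc a b) (hy : y ∈ Icc a b) : m (max q x) (max q y) ≤ max q (m x y) := by
  have hb : b ∈ Icc a b := right_mem_Icc.2 (hq.1.trans hq.2)
  have hmax : ∀ {z}, z ∈ Icc a b → max q z ∈ Icc a b :=
    fun hz => ⟨le_max_of_le_left hq.1, max_le hq.2 hz.2⟩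
  have hq_mul : ∀ {z}, z ∈ Icc a b → m q z ≤ q := fun hz =>
    (hm.mono hq hq hz hb le_rfl hz.2).trans (hm.unit hq).le
  rcases le_total x q with hxq | hqx
  · rw [max_eq_left hxq]
    exact (hq_mul (hmax hy)).trans (le_max_left _ _)
  rcases le_total y q with hyq | hqy
  · rw [max_eq_left hyq, hm.comm (hmax hx) hq]
    exact (hq_mul (hmax hx)).trans (le_max_left _ _)
  rw [max_eq_right hqx, max_eq_right hqy]
  exact le_max_right _ _

end IsContinuousTNorm

/-- The value at `0` is reset to `0`, which `g ∘ F` would violate when `g 0 ≠ 0`. -/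
noncomputable def mapDistribution (g : ℝ → ℝ) (F : ℝ≥0∞ → ℝ) (t : ℝ≥0∞) : ℝ :=
  if t = 0 then 0 else g (F t)

section MapDistribution

variable {g : ℝ → ℝ} {F : ℝ≥0∞ → ℝ} {t : ℝ≥0∞}

@[simp]
theorem mapDistribution_zero : mapDistribution g F 0 = 0 := if_pos rfl

theorem mapDistribution_of_ne_zero (ht : t ≠ 0) : mapDistribution g F t = g (F t) := if_neg ht

theorem IsDistanceDistribution.map (hF : IsDistanceDistribution F)
    (hg : Monotone g) (hgc : Continuous g) (hg01 : ∀ p, g p ∈ Icc (0:ℝ) 1) (hg1 : g 1 = 1) :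
    IsDistanceDistribution (mapDistribution g F) := by
  have hmem : ∀ t, mapDistribution g F t ∈ Icc (0:ℝ) 1 := fun t => by
    by_cases ht : t = 0
    · simp [ht]
    · exact mapDistribution_of_ne_zero ht ▸ hg01 _
  have hmono : Monotone (mapDistribution g F) := fun s t hst => by
    by_cases hs : s = 0
    · simpa [hs] using (hmem t).1
    · rw [mapDistribution_of_ne_zero hs, mapDistribution_of_ne_zero (ne_bot_of_le_ne_bot hs hst)]
      exact hg (hF.mono hst)
  refine ⟨hmem, mapDistribution_zero, ?_, hmono, fun t ht htop => ?_⟩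
  · rw [mapDistribution_of_ne_zero ENNReal.top_ne_zero, hF.top, hg1]
  have : Nonempty {s : ℝ≥0∞ // s < t} := ⟨⟨0, ht⟩⟩
  have hbdd : BddAbove (range fun s : {s : ℝ≥0∞ // s < t} => mapDistribution g F s) :=
    ⟨1, by rintro _ ⟨s, rfl⟩; exact (hmem s).2⟩
  refine le_antisymm ?_ (ciSup_le fun s => hmono s.2.le)
  rw [mapDistribution_of_ne_zero ht.ne', hF.leftCont t ht htop,
    hg.map_ciSup_of_continuousAt hgc.continuousAt ⟨1, by rintro _ ⟨s, rfl⟩; exact (hF.mem s).2⟩]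
  refine ciSup_le fun s => ?_
  -- `g (F s)` is dominated by the value at a positive time `s' ∈ [s, t)`
  have hs' : max s.1 (t / 2) < t := max_lt s.2 (ENNReal.half_lt_self ht.ne' htop)
  have hs'0 : max s.1 (t / 2) ≠ 0 := (ENNReal.half_pos ht.ne').trans_le (le_max_right _ _) |>.ne'
  calc g (F s) ≤ g (F (max s.1 (t / 2))) := hg (hF.mono (le_max_left _ _))
    _ = mapDistribution g F (max s.1 (t / 2)) := (mapDistribution_of_ne_zero hs'0).symm
    _ ≤ _ := le_ciSup hbdd ⟨_, hs'⟩

end MapDistribution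

theorem sSup_image_eq_one_iff {g : ℝ → ℝ} (hg : Monotone g) (hgc : Continuous g)
    (hg1 : ∀ p ∈ Icc (0:ℝ) 1, g p = 1 ↔ p = 1) {S : Set ℝ} (hS : S ⊆ Icc 0 1) :
    sSup (g '' S) = 1 ↔ sSup S = 1 := by
  rcases S.eq_empty_or_nonempty with rfl | hne
  · simp
  rw [← hg.map_csSup_of_continuousAt hgc.continuousAt hne ⟨1, fun p hp => (hS hp).2⟩]
  exact hg1 _ ⟨Real.sSup_nonneg fun p hp => (hS hp).1,
    Real.sSup_le (fun p hp => (hS hp).2) zero_le_one⟩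

structure IsLaxTNormHom (mo mn : ℝ → ℝ → ℝ) (g : ℝ → ℝ) : Prop where
  monotone : Monotone g
  continuous : Continuous g
  mem : ∀ p, g p ∈ Icc (0:ℝ) 1
  eq_one_iff : ∀ p ∈ Icc (0:ℝ) 1, g p = 1 ↔ p = 1
  map_le : ∀ a ∈ Icc (0:ℝ) 1, ∀ b ∈ Icc (0:ℝ) 1, mn (g a) (g b) ≤ g (mo a b)

namespace IsLaxTNormHom

variable {X : Type*} {mo mn : ℝ → ℝ → ℝ} {g : ℝ → ℝ} {α : X → X → ℝ≥0∞ → ℝ}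

theorem probDist_mapDistribution (hg : IsLaxTNormHom mo mn g)
    (hα : ∀ x y, IsDistanceDistribution (α x y)) :
    probDist (fun x y => mapDistribution g (α x y)) = probDist α := by
  funext x A
  unfold probDist
  congr 1
  ext r
  by_cases hr : r = 0
  · simp [hr, fun a => (hα x a).zero]
  simp only [mem_ofPred_eq, mapDistribution_of_ne_zero hr]
  rw [← image_image g (fun a => α x a r)]
  exact sSup_image_eq_one_iff hg.monotone hg.continuous hg.eq_one_iff
    (by rintro _ ⟨a, -, rfl⟩; exact (hα x a).mem r)

theorem isProbMetric_mapDistribution (hg : IsLaxTNormHom mo mn g)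
    (hmn : IsContinuousTNorm 0 1 mn) (hα : IsProbMetric mo α) :
    IsProbMetric mn (fun x y => mapDistribution g (α x y)) := by
  have hone : g 1 = 1 := (hg.eq_one_iff 1 (right_mem_Icc.2 zero_le_one)).2 rfl
  have hdd : ∀ x y, IsDistanceDistribution (mapDistribution g (α x y)) := fun x y =>
    (hα.dd x y).map hg.monotone hg.continuous hg.mem hone
  refine ⟨hdd, fun x t ht => ?_, fun x y t => by simp only [mapDistribution, hα.symm x y t],
    fun x y h => ?_, fun x y z r s => ?_⟩
  · rw [mapDistribution_of_ne_zero ht.ne', hα.refl x t ht, hone]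
  · refine hα.sep x y fun t ht => (hg.eq_one_iff _ ((hα.dd x y).mem t)).1 ?_
    rw [← mapDistribution_of_ne_zero (g := g) ht.ne']
    exact h t ht
  by_cases hr : r = 0
  · rw [hr, mapDistribution_zero, hmn.left_absorb ((hdd x y).mem s)]
    exact ((hdd x z).mem _).1
  by_cases hs : s = 0
  · rw [hs, mapDistribution_zero, hmn.right_absorb ((hdd y z).mem r)]
    exact ((hdd x z).mem _).1
  rw [mapDistribution_of_ne_zero hr, mapDistribution_of_ne_zero hs,
    mapDistribution_of_ne_zero (by simp [hr, hs])]
  exact (hg.map_le _ ((hα.dd y z).mem r) _ ((hα.dd x y).mem s)).trans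
    (hg.monotone (hα.triangle x y z r s))

theorem probMetrizable {δ : X → Set X → ℝ≥0∞} (hg : IsLaxTNormHom mo mn g)
    (hmn : IsContinuousTNorm 0 1 mn) (hδ : ProbMetrizable mo δ) : ProbMetrizable mn δ := by
  obtain ⟨α, hα, hδα⟩ := hδ
  exact ⟨_, hg.isProbMetric_mapDistribution hmn hα, by
    rw [hg.probDist_mapDistribution hα.dd]; exact hδα⟩

end IsLaxTNormHom

noncomputable def StrictMonoOn.orderIsoOfImageEq {α β : Type*} [LinearOrder α] [Preorder β]
    {f : α → β} {s : Set α} {t : Set β} (hf : StrictMonoOn f s) (h : f '' s = t) : s ≃o t :=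
  (hf.orderIso f s).trans (OrderIso.setCongr _ _ h)

theorem StrictMonoOn.coe_orderIsoOfImageEq_apply {α β : Type*} [LinearOrder α] [Preorder β]
    {f : α → β} {s : Set α} {t : Set β} (hf : StrictMonoOn f s) (h : f '' s = t) (x : s) :
    (hf.orderIsoOfImageEq h x : β) = f x :=
  rfl

namespace OrderIso

variable {a b c d : ℝ}

theorem coe_apply_eq_right_iff (e : Icc a b ≃o Icc c d) (x : Icc a b) :
    (e x : ℝ) = d ↔ (x : ℝ) = b := by
  have : Fact (a ≤ b) := ⟨x.2.1.trans x.2.2⟩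
  have : Fact (c ≤ d) := ⟨(e x).2.1.trans (e x).2.2⟩
  simpa only [Subtype.ext_iff, Icc.coe_top] using map_eq_top_iff e (a := x)

variable (e : Icc a b ≃o Icc c d) (hab : a ≤ b)

theorem monotone_IccExtend : Monotone (IccExtend hab fun x => (e x : ℝ)) :=
  Monotone.IccExtend hab fun _ _ hxy => e.monotone hxy

theorem continuous_IccExtend : Continuous (IccExtend hab fun x => (e x : ℝ)) :=
  continuous_IccExtend_iff.2 (continuous_subtype_val.comp e.continuous)

end OrderIso

section IdempotentSummand

variable {m₁ m₂ : ℝ → ℝ → ℝ} {q : ℝ} {φ : ℝ → ℝ}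

theorem isLaxTNormHom_IccExtend_orderIso (h₁ : IsContinuousTNorm 0 1 m₁)
    (hq : q ∈ Icc (0:ℝ) 1) (hqi : m₁ q q = q) (hmono : StrictMonoOn φ (Icc q 1))
    (himg : φ '' Icc q 1 = Icc 0 1)
    (hhom : ∀ a ∈ Icc q 1, ∀ b ∈ Icc q 1, φ (m₁ a b) = m₂ (φ a) (φ b)) :
    IsLaxTNormHom m₁ m₂ (IccExtend hq.2 fun x => (hmono.orderIsoOfImageEq himg x : ℝ)) := by
  have hq1 : q < 1 := by
    refine hq.2.lt_of_ne fun h => ?_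
    rw [h, Icc_self, image_singleton, eq_comm, Icc_eq_singleton_iff] at himg
    exact zero_ne_one (himg.1.trans himg.2.symm)
  have hmax : ∀ {p}, p ∈ Icc (0:ℝ) 1 → max q p ∈ Icc q 1 :=
    fun hp => ⟨le_max_left _ _, max_le hq.2 hp.2⟩
  refine ⟨OrderIso.monotone_IccExtend _ hq.2, OrderIso.continuous_IccExtend _ hq.2,
    fun p => (_ : Icc (0:ℝ) 1).2, fun p hp => ?_, fun a ha b hb => ?_⟩
  · rw [IccExtend_apply, OrderIso.coe_apply_eq_right_iff]
    dsimp only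
    rw [min_eq_right hp.2]
    exact ⟨fun h => ((max_eq_iff.1 h).resolve_left fun h' => hq1.ne h'.1).1,
      fun h => by rw [h, max_eq_right hq.2]⟩
  simp only [IccExtend_apply, StrictMonoOn.coe_orderIsoOfImageEq_apply]
  rw [min_eq_right ha.2, min_eq_right hb.2, min_eq_right (h₁.mem ha hb).2,
    ← hhom _ (hmax ha) _ (hmax hb)]
  exact hmono.monotoneOn (h₁.mem_Icc_of_idempotent hq hqi (hmax ha) (hmax hb))
    (hmax (h₁.mem ha hb)) (h₁.map_max_le hq ha hb)

theorem isLaxTNormHom_IccExtend_orderIso_symm (h₁ : IsContinuousTNorm 0 1 m₁)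
    (hq : q ∈ Icc (0:ℝ) 1) (hqi : m₁ q q = q) (hmono : StrictMonoOn φ (Icc q 1))
    (himg : φ '' Icc q 1 = Icc 0 1)
    (hhom : ∀ a ∈ Icc q 1, ∀ b ∈ Icc q 1, φ (m₁ a b) = m₂ (φ a) (φ b)) :
    IsLaxTNormHom m₂ m₁
      (IccExtend zero_le_one fun y => ((hmono.orderIsoOfImageEq himg).symm y : ℝ)) := by
  set e := hmono.orderIsoOfImageEq himg
  refine ⟨e.symm.monotone_IccExtend _, e.symm.continuous_IccExtend _,
    fun p => ⟨hq.1.trans (e.symm _).2.1, (e.symm _).2.2⟩,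
    fun p hp => ?_, fun a ha b hb => le_of_eq ?_⟩
  · rw [IccExtend_of_mem _ _ hp, e.symm.coe_apply_eq_right_iff]
  rw [IccExtend_of_mem _ _ ha, IccExtend_of_mem _ _ hb]
  set x := e.symm ⟨a, ha⟩
  set y := e.symm ⟨b, hb⟩
  have hxy := h₁.mem_Icc_of_idempotent hq hqi x.2 y.2
  -- `φ` carries `m₁ x y` to `m₂ a b`, hence `e⁻¹` carries `m₂ a b` back to `m₁ x y`
  have he : (e ⟨_, hxy⟩ : ℝ) = m₂ a b := by
    rw [StrictMonoOn.coe_orderIsoOfImageEq_apply, hhom _ x.2 _ y.2,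
      ← StrictMonoOn.coe_orderIsoOfImageEq_apply hmono himg x, e.apply_symm_apply,
      ← StrictMonoOn.coe_orderIsoOfImageEq_apply hmono himg y, e.apply_symm_apply]
  rw [IccExtend_of_mem _ _ (he ▸ (e _).2)]
  simp only [← he, Subtype.coe_eta, e.symm_apply_apply]

end IdempotentSummand

theorem stmt13_general {X : Type*} (m₁ m₂ : ℝ → ℝ → ℝ)
    (h₁ : IsContinuousTNorm 0 1 m₁) (h₂ : IsContinuousTNorm 0 1 m₂)
    (q : ℝ) (hq : q ∈ Set.Icc (0:ℝ) 1) (hqi : m₁ q q = q)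
    (φ : ℝ → ℝ) (hmono : StrictMonoOn φ (Set.Icc q 1))
    (himg : φ '' Set.Icc q 1 = Set.Icc 0 1)
    (hhom : ∀ a ∈ Set.Icc q 1, ∀ b ∈ Set.Icc q 1, φ (m₁ a b) = m₂ (φ a) (φ b))
    (δ : X → Set X → ℝ≥0∞) :
    ProbMetrizable m₁ δ ↔ ProbMetrizable m₂ δ :=
  ⟨(isLaxTNormHom_IccExtend_orderIso h₁ hq hqi hmono himg hhom).probMetrizable h₂,
    (isLaxTNormHom_IccExtend_orderIso_symm h₁ hq hqi hmono himg hhom).probMetrizable h₁⟩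

theorem stmt13 {X : Type*} (m₁ m₂ : ℝ → ℝ → ℝ)
    (h₁ : IsContinuousTNorm 0 1 m₁) (h₂ : IsContinuousTNorm 0 1 m₂)
    (q : ℝ) (hq : q ∈ Set.Icc (0:ℝ) 1) (hqi : m₁ q q = q)
    (φ : ℝ → ℝ) (hmono : StrictMonoOn φ (Set.Icc q 1))
    (himg : φ '' Set.Icc q 1 = Set.Icc 0 1)
    (hhom : ∀ a ∈ Set.Icc q 1, ∀ b ∈ Set.Icc q 1, φ (m₁ a b) = m₂ (φ a) (φ b))
    (δ : X → Set X → ℝ≥0∞) (hδ : IsApproach δ) :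
    ProbMetrizable m₁ δ ↔ ProbMetrizable m₂ δ :=
  stmt13_general m₁ m₂ h₁ h₂ q hq hqi φ hmono himg hhom δ
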